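/- Let 0 ≤ t ≤ r ≤ n, and let 𝓜 be a class of matroids that is closed under contraction and under isomorphism, such that no member of 𝓜 of rank r has a circuit of cardinality at most t. Write \tilde m(n,r) for the number of members of 𝓜 with ground set {1,…,n} and rank r. Then log \tilde m(n,r) ≤ ( C(n,r) / C(n−t, r−t) ) · log \tilde m(n−t, r−t). -/

import Mathlib

/-!
Encode a matroid on `Fin n` by the indicator of its bases among the `r`-subsets. For a `t`-set `T`,
the girth hypothesis makes `T` independent, and the bases containing `T` are the sets `B ∪ T` with
`B` a base of `M ／ T`; relabelled onto `Fin (n - t)`, `M ／ T` is again a member of the class, of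
rank `r - t`. So the encoding restricted to the `r`-sets containing `T` takes at most
`m̃(n - t, r - t)` values. Every `r`-set contains `C(r, t)` of the `t`-sets, and Shearer's lemma
gives `m̃(n, r) ^ C(r, t) ≤ m̃(n - t, r - t) ^ C(n, t)`; finally
`C(n, t) / C(r, t) = C(n, r) / C(n - t, r - t)`.
-/

open Matroid Set Filter Real

namespace PavingEnum

/-- The rank of a matroid: the largest cardinality of a base. -/
noncomputable def mrk {α : Type*} (M : Matroid α) : ℕ :=
  sSup {n : ℕ | ∃ B, M.IsBase B ∧ B.ncard = n}

/-- The rank of a set in a matroid: the largest cardinality of an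
independent subset of the set. -/
noncomputable def mrnk {α : Type*} (M : Matroid α) (X : Set α) : ℕ :=
  sSup {n : ℕ | ∃ I, I ⊆ X ∧ M.Indep I ∧ I.ncard = n}

/-- A circuit is a minimal dependent set. -/
def IsCircuit {α : Type*} (M : Matroid α) (C : Set α) : Prop :=
  M.Dep C ∧ ∀ D, D ⊂ C → M.Indep D

/-- A matroid of rank `r` is paving if every circuit has cardinality at least `r`. -/
def Paving {α : Type*} (M : Matroid α) : Prop :=
  ∀ C, IsCircuit M C → (mrk M : ℕ∞) ≤ C.encard

/-- A matroid is sparse paving if both it and its dual are paving. -/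
def SparsePaving {α : Type*} (M : Matroid α) : Prop :=
  Paving M ∧ Paving M✶

/-- `numMatroids n r` : the number of matroids on the ground set `{1, …, n}` of rank `r`. -/
noncomputable def numMatroids (n r : ℕ) : ℕ :=
  {M : Matroid (Fin n) | M.E = Set.univ ∧ mrk M = r}.ncard

/-- `numPaving n r` : the number of paving matroids on `{1, …, n}` of rank `r`. -/
noncomputable def numPaving (n r : ℕ) : ℕ :=
  {M : Matroid (Fin n) | M.E = Set.univ ∧ mrk M = r ∧ Paving M}.ncard

/-- `numSparsePaving n r` : the number of sparse paving matroids on `{1, …, n}` of rank `r`. -/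
noncomputable def numSparsePaving (n r : ℕ) : ℕ :=
  {M : Matroid (Fin n) | M.E = Set.univ ∧ mrk M = r ∧ SparsePaving M}.ncard

end PavingEnum

namespace PavingEnum

/-- The contraction `M / C`, defined by duality from restriction. -/
noncomputable def mcontract {α : Type*} (M : Matroid α) (C : Set α) : Matroid α :=
  (M✶ ↾ (M.E \ C))✶

/-- An isomorphism between matroids: a bijection between the ground sets
preserving independence. -/
def MatroidIso {α β : Type*} (M : Matroid α) (N : Matroid β) : Prop :=
  ∃ e : M.E ≃ N.E, ∀ I : Set M.E,
    M.Indep ((↑) '' I) ↔ N.Indep ((↑) '' (e '' I))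

/-- The number of members of the class `𝓜` with ground set `{1, …, n}` and rank `r`. -/
noncomputable def classCount (𝓜 : ∀ ⦃α : Type⦄, Matroid α → Prop) (n r : ℕ) : ℕ :=
  {M : Matroid (Fin n) | 𝓜 M ∧ M.E = Set.univ ∧ mrk M = r}.ncard

end PavingEnum

open scoped NNReal

open Finset in
/-- Hölder's inequality for several factors. -/
theorem NNReal.sum_prod_rpow_le_prod_sum_rpow {σ τ : Type*} (X : Finset σ) (J : Finset τ)
    (w : τ → ℝ≥0) (hw : ∑ j ∈ J, w j = 1) (f : τ → σ → ℝ≥0) :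
    ∑ x ∈ X, ∏ j ∈ J, f j x ^ (w j : ℝ) ≤ ∏ j ∈ J, (∑ x ∈ X, f j x) ^ (w j : ℝ) := by
  set c : τ → ℝ≥0 := fun j ↦ ∑ x ∈ X, f j x
  -- `f j x = c j * (f j x / c j)` also when `c j = 0`, since then `f j x = 0`
  have hsplit : ∀ x ∈ X, ∀ j, f j x = c j * (f j x / c j) := fun x hx j ↦
    (mul_div_cancel_of_imp' fun hc ↦ sum_eq_zero_iff.1 hc x hx).symm
  have hamgm : ∑ x ∈ X, ∏ j ∈ J, (f j x / c j) ^ (w j : ℝ) ≤ 1 := calc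
    _ ≤ ∑ x ∈ X, ∑ j ∈ J, w j * (f j x / c j) :=
      sum_le_sum fun x _ ↦ NNReal.geom_mean_le_arith_mean_weighted J w _ hw
    _ = ∑ j ∈ J, w j * (c j / c j) := by
      rw [sum_comm]; simp only [← mul_sum, ← sum_div]; rfl
    _ ≤ ∑ j ∈ J, w j := sum_le_sum fun j _ ↦ mul_le_of_le_one_right' (div_self_le_one _)
    _ = 1 := hw
  calc ∑ x ∈ X, ∏ j ∈ J, f j x ^ (w j : ℝ)
      = (∏ j ∈ J, c j ^ (w j : ℝ)) * ∑ x ∈ X, ∏ j ∈ J, (f j x / c j) ^ (w j : ℝ) := by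
        rw [mul_sum]
        refine sum_congr rfl fun x hx ↦ ?_
        rw [← prod_mul_distrib]
        refine prod_congr rfl fun j _ ↦ ?_
        rw [← NNReal.mul_rpow, ← hsplit x hx]
    _ ≤ ∏ j ∈ J, c j ^ (w j : ℝ) := mul_le_of_le_one_right' hamgm

theorem Nat.cast_choose_div_cast_choose {t r n : ℕ} (htr : t ≤ r) (hrn : r ≤ n) :
    (n.choose t : ℝ) / r.choose t = n.choose r / (n - t).choose (r - t) := by
  rw [div_eq_div_iff (by exact_mod_cast (Nat.choose_pos htr).ne')
    (by exact_mod_cast (Nat.choose_pos (Nat.sub_le_sub_right hrn t)).ne')]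
  exact_mod_cast (Nat.choose_mul htr).symm

theorem Real.log_natCast_le_mul_log_of_le_rpow {x y : ℕ} {c : ℝ} (hc : 0 < c)
    (h : (x : ℝ) ≤ (y : ℝ) ^ c) : Real.log x ≤ c * Real.log y := by
  rcases x.eq_zero_or_pos with rfl | hx
  · simpa using mul_nonneg hc.le (Real.log_natCast_nonneg y)
  have hy : 0 < (y : ℝ) := by
    rcases y.eq_zero_or_pos with rfl | hy
    · rw [Nat.cast_zero, Real.zero_rpow hc.ne'] at h
      exact absurd h (by exact_mod_cast hx.not_ge)
    · exact_mod_cast hy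
  calc Real.log x ≤ Real.log (y ^ c) := Real.log_le_log (by exact_mod_cast hx) h
    _ = c * Real.log y := Real.log_rpow hy c

namespace Finset

variable {ι β τ : Type*} [DecidableEq β]

theorem sum_card_image_restrict_filter_le (S : Finset (ι → β)) {G : Finset ι} {a : ι}
    (ha : a ∈ G) {B : Finset β} (hB : ∀ s ∈ S, s a ∈ B) :
    ∑ b ∈ B, #((S.filter (· a = b)).image G.restrict) ≤ #(S.image G.restrict) := by
  have hmaps : ∀ u ∈ S.image G.restrict, u ⟨a, ha⟩ ∈ B := by
    simp only [Finset.mem_image]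
    rintro _ ⟨s, hs, rfl⟩
    exact hB s hs
  rw [card_eq_sum_card_fiberwise hmaps]
  refine sum_le_sum fun b _ ↦ card_le_card ?_
  simp only [subset_iff, mem_filter, Finset.mem_image]
  rintro _ ⟨s, ⟨hs, rfl⟩, rfl⟩
  exact ⟨⟨s, hs, rfl⟩, rfl⟩

variable [DecidableEq ι] [DecidableEq τ]

/-- Shearer's lemma. -/
theorem card_le_prod_card_image_restrict_rpow (𝒯 : Finset τ) (F : τ → Finset ι) {k : ℕ}
    (hk : 0 < k) (A : Finset ι) (hcov : ∀ i ∈ A, k ≤ #{T ∈ 𝒯 | i ∈ F T})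
    (S : Finset (ι → β)) (hS : ∀ s ∈ S, ∀ s' ∈ S, ∀ i ∉ A, s i = s' i) :
    (#S : ℝ≥0) ≤ ∏ T ∈ 𝒯, (#(S.image (F T).restrict) : ℝ≥0) ^ (k : ℝ)⁻¹ := by
  induction A using Finset.induction_on generalizing S with
  | empty =>
    rcases S.eq_empty_or_nonempty with rfl | hne
    · simp
    have hS1 : #S ≤ 1 :=
      card_le_one.2 fun s hs s' hs' ↦ funext fun i ↦ hS s hs s' hs' i (notMem_empty i)
    refine (Nat.cast_le_one.2 hS1).trans
      (one_le_prod' fun T _ ↦ NNReal.one_le_rpow ?_ (by positivity))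
    exact_mod_cast card_pos.2 (hne.image _)
  | @insert a A ha ih =>
    -- Split `S` by the value at `a`. Hölder's inequality over `k` sets `F T ∋ a` recombines the
    -- bounds on the fibres, whose projections to such an `F T` are pairwise disjoint.
    set B := S.image (· a)
    set fiber : β → Finset (ι → β) := fun b ↦ S.filter (· a = b)
    obtain ⟨𝒦, h𝒦, h𝒦k⟩ := exists_subset_card_eq (hcov a (mem_insert_self a A))
    have h𝒦𝒯 : 𝒦 ⊆ 𝒯 := h𝒦.trans (filter_subset _ _)
    have hfiber : ∀ b ∈ B, (#(fiber b) : ℝ≥0) ≤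
        (∏ T ∈ 𝒯 \ 𝒦, (#(S.image (F T).restrict) : ℝ≥0) ^ (k : ℝ)⁻¹) *
          ∏ T ∈ 𝒦, (#((fiber b).image (F T).restrict) : ℝ≥0) ^ (k : ℝ)⁻¹ := by
      intro b _
      refine (ih (fun i hi ↦ hcov i (mem_insert_of_mem hi)) (fiber b) ?_).trans ?_
      · intro s hs s' hs' i hi
        simp only [fiber, mem_filter] at hs hs'
        by_cases hia : i = a
        · rw [hia, hs.2, hs'.2]
        · exact hS s hs.1 s' hs'.1 i (by simp [hia, hi])
      rw [← prod_sdiff h𝒦𝒯]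
      gcongr
      exact filter_subset _ _
    have hweights : ∑ _T ∈ 𝒦, ((k : ℝ≥0)⁻¹) = 1 := by
      rw [sum_const, h𝒦k, nsmul_eq_mul, mul_inv_cancel₀ (by exact_mod_cast hk.ne')]
    calc (#S : ℝ≥0) = ∑ b ∈ B, (#(fiber b) : ℝ≥0) := by
          exact_mod_cast card_eq_sum_card_fiberwise fun s hs ↦ mem_image_of_mem _ hs
      _ ≤ ∑ b ∈ B, (∏ T ∈ 𝒯 \ 𝒦, (#(S.image (F T).restrict) : ℝ≥0) ^ (k : ℝ)⁻¹) *
            ∏ T ∈ 𝒦, (#((fiber b).image (F T).restrict) : ℝ≥0) ^ (k : ℝ)⁻¹ :=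
          sum_le_sum hfiber
      _ ≤ (∏ T ∈ 𝒯 \ 𝒦, (#(S.image (F T).restrict) : ℝ≥0) ^ (k : ℝ)⁻¹) *
            ∏ T ∈ 𝒦, (∑ b ∈ B, (#((fiber b).image (F T).restrict) : ℝ≥0)) ^ (k : ℝ)⁻¹ := by
          rw [← mul_sum]
          gcongr
          simpa using NNReal.sum_prod_rpow_le_prod_sum_rpow B 𝒦 _ hweights
            fun T b ↦ (#((fiber b).image (F T).restrict) : ℝ≥0)
      _ ≤ ∏ T ∈ 𝒯, (#(S.image (F T).restrict) : ℝ≥0) ^ (k : ℝ)⁻¹ := by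
          rw [← prod_sdiff h𝒦𝒯]
          gcongr with T hT
          exact_mod_cast sum_card_image_restrict_filter_le S (mem_filter.1 (h𝒦 hT)).2
            fun s hs ↦ mem_image_of_mem _ hs

end Finset

namespace PavingEnum

open Function

section Matroid

variable {α β : Type*} {M : Matroid α} {T A B X : Set α}

theorem mcontract_eq_contract (M : Matroid α) (C : Set α) : mcontract M C = M ／ C := rfl

theorem isCircuit_iff : IsCircuit M X ↔ M.IsCircuit X := by
  rw [Matroid.isCircuit_iff_forall_ssubset]
  rfl

theorem indep_of_encard_le {t : ℕ∞} (hgirth : ∀ C, IsCircuit M C → ¬ C.encard ≤ t)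
    (hXE : X ⊆ M.E) (hXt : X.encard ≤ t) : M.Indep X := by
  by_contra hX
  obtain ⟨C, hCX, hC⟩ := ((not_indep_iff hXE).1 hX).exists_isCircuit_subset
  exact hgirth C (isCircuit_iff.2 hC) ((encard_le_encard hCX).trans hXt)

theorem mrk_eq_ncard (hB : M.IsBase B) : mrk M = B.ncard := by
  have hranks : {n | ∃ B', M.IsBase B' ∧ B'.ncard = n} = {B.ncard} := by
    ext n
    simp only [mem_ofPred_eq, mem_singleton_iff]
    exact ⟨fun ⟨B', hB', h⟩ ↦ h ▸ hB'.ncard_eq_ncard_of_isBase hB, fun h ↦ ⟨B, hB, h.symm⟩⟩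
  rw [mrk, hranks, csSup_singleton]

theorem mrk_contract_add_ncard [M.RankFinite] (hT : M.Indep T) :
    mrk (M ／ T) + T.ncard = mrk M := by
  obtain ⟨B, hB, hTB⟩ := hT.exists_isBase_superset
  have hBT : (M ／ T).IsBase (B \ T) :=
    hT.contract_isBase_iff.2 ⟨by rwa [sdiff_union_of_subset hTB], disjoint_sdiff_left⟩
  rw [mrk_eq_ncard hBT, mrk_eq_ncard hB, ncard_sdiff_add_ncard_of_subset hTB hB.finite]

section comap

variable {N : Matroid β} {g : α → β}

theorem comap_ground_eq_univ (hr : range g = N.E) : (N.comap g).E = univ := by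
  rw [comap_ground_eq, ← hr, preimage_range]

theorem comap_isBase_iff_of_range (hg : Injective g) (hr : range g = N.E) :
    (N.comap g).IsBase B ↔ N.IsBase (g '' B) := by
  rw [comap_isBase_iff, image_preimage_eq_of_subset hr.ge, isBasis_ground_iff, ← hr,
    preimage_range]
  exact ⟨fun h ↦ h.1, fun h ↦ ⟨h, hg.injOn, subset_univ B⟩⟩

theorem mrk_comap (hg : Injective g) (hr : range g = N.E) : mrk (N.comap g) = mrk N := by
  obtain ⟨B, hB⟩ := (N.comap g).exists_isBase
  rw [mrk_eq_ncard hB, mrk_eq_ncard ((comap_isBase_iff_of_range hg hr).1 hB),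
    ncard_image_of_injective _ hg]

theorem matroidIso_comap (hg : Injective g) (hr : range g = N.E) : MatroidIso N (N.comap g) := by
  have hbij : Bijective fun x : (N.comap g).E ↦ (⟨g x, x.2⟩ : N.E) := by
    refine ⟨fun x y h ↦ Subtype.ext (hg (congrArg Subtype.val h)), fun y ↦ ?_⟩
    obtain ⟨x, hx⟩ := hr.ge y.2
    exact ⟨⟨x, by simp [hx]⟩, Subtype.ext hx⟩
  refine ⟨(Equiv.ofBijective _ hbij).symm, fun I ↦ ?_⟩
  rw [comap_indep_iff_of_injOn hg.injOn, Equiv.image_symm_eq_preimage]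
  congr!
  ext y
  constructor
  · rintro ⟨⟨y, hy⟩, hyI, rfl⟩
    obtain ⟨x, rfl⟩ := hr.ge hy
    exact ⟨x, ⟨⟨x, hy⟩, hyI, rfl⟩, rfl⟩
  · rintro ⟨-, ⟨x, hxI, rfl⟩, rfl⟩
    exact ⟨_, hxI, rfl⟩

end comap

theorem comap_contract_isBase_iff {g : β → α} (hT : M.Indep T) (hg : Injective g)
    (hr : range g = M.E \ T) (hTA : T ⊆ A) (hAE : A ⊆ M.E) :
    ((M ／ T).comap g).IsBase (g ⁻¹' A) ↔ M.IsBase A := by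
  rw [comap_isBase_iff_of_range hg hr, image_preimage_eq_inter_range, hr, hT.contract_isBase_iff,
    ← inter_sdiff_assoc, inter_eq_left.2 hAE, sdiff_union_of_subset hTA,
    and_iff_left disjoint_sdiff_left]

def baseIndicator (M : Matroid α) (A : Finset α) : Prop :=
  M.IsBase A

theorem not_baseIndicator_of_card_ne {A : Finset α} (hA : A.card ≠ mrk M) :
    ¬ baseIndicator M A :=
  fun hB ↦ hA (by rw [mrk_eq_ncard hB, ncard_coe_finset])

theorem restrict_baseIndicator_eq_comap_contract [Fintype α] [DecidableEq α]
    (hE : M.E = univ) {T : Finset α} (hT : M.Indep T) {g : β → α} (hg : Injective g)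
    (hr : range g = (↑T)ᶜ) :
    ({A | T ⊆ A} : Finset (Finset α)).restrict (baseIndicator M) =
      fun A ↦ ((M ／ ↑T).comap g).IsBase (g ⁻¹' ↑(A.1 : Finset α)) := by
  have hr' : range g = M.E \ T := by rw [hE, ← compl_eq_univ_sdiff, hr]
  funext ⟨A, hA⟩
  have hTA : T ⊆ A := by simpa using hA
  exact propext
    (comap_contract_isBase_iff hT hg hr' (by exact_mod_cast hTA) (hE ▸ subset_univ _)).symm

instance finite_matroid [Finite α] : Finite (Matroid α) :=
  Finite.of_injective (fun M : Matroid α ↦ (M.E, M.Indep)) fun _ _ h ↦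
    ext_indep (congrArg Prod.fst h) fun I _ ↦ Iff.of_eq (congrFun (congrArg Prod.snd h) I)

theorem baseIndicator_injOn [Finite α] : InjOn baseIndicator {M : Matroid α | M.E = univ} := by
  intro M hM M' hM' h
  refine ext_isBase (hM.trans hM'.symm) fun B _ ↦ ?_
  simpa [baseIndicator] using Iff.of_eq (congrFun h (toFinite B).toFinset)

end Matroid

section ClassCount

def classMembers (𝓜 : ∀ ⦃α : Type⦄, Matroid α → Prop) (α : Type) (r : ℕ) : Set (Matroid α) :=
  {M | 𝓜 M ∧ M.E = univ ∧ mrk M = r}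

variable {𝓜 : ∀ ⦃α : Type⦄, Matroid α → Prop} {α β : Type} {t r n : ℕ}

theorem comap_contract_mem_classMembers
    (hcontract : ∀ (α : Type) (M : Matroid α) (C : Set α), 𝓜 M → 𝓜 (mcontract M C))
    (hiso : ∀ (α β : Type) (M : Matroid α) (N : Matroid β), 𝓜 M → MatroidIso M N → 𝓜 N)
    [Finite α] {M : Matroid α} (hM : M ∈ classMembers 𝓜 α r) {T : Set α} (hT : M.Indep T)
    {g : β → α} (hg : Injective g) (hr : range g = Tᶜ) :
    (M ／ T).comap g ∈ classMembers 𝓜 β (r - T.ncard) := by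
  obtain ⟨h𝓜, hE, hrk⟩ := hM
  have hr' : range g = (M ／ T).E := by rw [contract_ground, hE, ← compl_eq_univ_sdiff, hr]
  refine ⟨hiso _ _ _ _ (mcontract_eq_contract M T ▸ hcontract _ M T h𝓜) (matroidIso_comap hg hr'),
    comap_ground_eq_univ hr', ?_⟩
  rw [mrk_comap hg hr', ← hrk, ← mrk_contract_add_ncard hT, Nat.add_sub_cancel]

open Finset

theorem card_image_restrict_le_classCount
    (hcontract : ∀ (α : Type) (M : Matroid α) (C : Set α), 𝓜 M → 𝓜 (mcontract M C))
    (hiso : ∀ (α β : Type) (M : Matroid α) (N : Matroid β), 𝓜 M → MatroidIso M N → 𝓜 N)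
    (hgirth : ∀ M ∈ classMembers 𝓜 (Fin n) r, ∀ C, IsCircuit M C → ¬ C.encard ≤ t)
    {T : Finset (Fin n)} (hT : #T = t) :
    #(((toFinite (classMembers 𝓜 (Fin n) r)).toFinset.image baseIndicator).image
      ({A | T ⊆ A} : Finset (Finset (Fin n))).restrict) ≤ classCount 𝓜 (n - t) (r - t) := by
  classical
  have hTc : #Tᶜ = n - t := by rw [card_compl, Fintype.card_fin, hT]
  set g := Tᶜ.orderEmbOfFin hTc
  have hr : Set.range g = (↑T)ᶜ := by rw [range_orderEmbOfFin, coe_compl]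
  set S := toFinite (classMembers 𝓜 (Fin (n - t)) (r - t))
  calc _ ≤ #(S.toFinset.image fun Q (A : ({A | T ⊆ A} : Finset (Finset (Fin n)))) ↦
          Q.IsBase (g ⁻¹' ↑A.1)) := by
        refine card_le_card fun u hu ↦ ?_
        simp only [Finset.mem_image, Set.Finite.mem_toFinset] at hu ⊢
        obtain ⟨_, ⟨M, hM, rfl⟩, rfl⟩ := hu
        have hTind : M.Indep T := indep_of_encard_le (hgirth M hM) (by simp [hM.2.1])
          (by simp [hT])
        refine ⟨_, ?_, (restrict_baseIndicator_eq_comap_contract hM.2.1 hTind g.injective hr).symm⟩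
        simpa [hT] using comap_contract_mem_classMembers hcontract hiso hM hTind g.injective hr
    _ ≤ #S.toFinset := card_image_le
    _ = classCount 𝓜 (n - t) (r - t) := (Set.ncard_eq_toFinset_card _ S).symm

theorem classCount_le_rpow
    (hcontract : ∀ (α : Type) (M : Matroid α) (C : Set α), 𝓜 M → 𝓜 (mcontract M C))
    (hiso : ∀ (α β : Type) (M : Matroid α) (N : Matroid β), 𝓜 M → MatroidIso M N → 𝓜 N)
    (htr : t ≤ r)
    (hgirth : ∀ M ∈ classMembers 𝓜 (Fin n) r, ∀ C, IsCircuit M C → ¬ C.encard ≤ t) :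
    (classCount 𝓜 n r : ℝ) ≤
      (classCount 𝓜 (n - t) (r - t) : ℝ) ^ ((n.choose t : ℝ) / r.choose t) := by
  classical
  set S := (toFinite (classMembers 𝓜 (Fin n) r)).toFinset.image baseIndicator
  have hS : classCount 𝓜 n r = #S := by
    rw [card_image_of_injOn (baseIndicator_injOn.mono fun M hM ↦
      (Set.Finite.mem_toFinset _).1 hM |>.2.1), ← Set.ncard_eq_toFinset_card]
    rfl
  have hagree : ∀ s ∈ S, ∀ s' ∈ S, ∀ A ∉ powersetCard r univ, s A = s' A := by
    simp only [S, Finset.mem_image, Set.Finite.mem_toFinset, mem_powersetCard,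
      Finset.subset_univ, true_and]
    rintro _ ⟨M, hM, rfl⟩ _ ⟨M', hM', rfl⟩ A hA
    exact propext (iff_of_false (not_baseIndicator_of_card_ne (hM.2.2 ▸ hA))
      (not_baseIndicator_of_card_ne (hM'.2.2 ▸ hA)))
  have hcov : ∀ A ∈ powersetCard r univ,
      r.choose t ≤ #{T ∈ powersetCard t univ | A ∈ ({B | T ⊆ B} : Finset (Finset (Fin n)))} := by
    intro A hA
    rw [← (mem_powersetCard.1 hA).2, ← card_powersetCard]
    refine card_le_card fun T hT ↦ ?_
    simp only [mem_powersetCard, mem_filter, Finset.mem_univ, true_and, Finset.subset_univ] at hT ⊢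
    exact ⟨hT.2, hT.1⟩
  have hshearer := card_le_prod_card_image_restrict_rpow _ _ (Nat.choose_pos htr) _ hcov S hagree
  rw [← hS] at hshearer
  have hbound : (classCount 𝓜 n r : ℝ≥0) ≤
      (classCount 𝓜 (n - t) (r - t) : ℝ≥0) ^ ((n.choose t : ℝ) / r.choose t) := calc
    _ ≤ ∏ _T ∈ powersetCard t univ,
          (classCount 𝓜 (n - t) (r - t) : ℝ≥0) ^ ((r.choose t : ℝ)⁻¹) := by
        refine hshearer.trans (prod_le_prod' fun T hT ↦ ?_)
        gcongr
        exact card_image_restrict_le_classCount hcontract hiso hgirth (mem_powersetCard.1 hT).2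
    _ = _ := by
        rw [prod_const, card_powersetCard, card_univ, Fintype.card_fin, ← NNReal.rpow_natCast,
          ← NNReal.rpow_mul, div_eq_inv_mul]
  exact_mod_cast hbound

end ClassCount

end PavingEnum

open PavingEnum

/-- If 𝓜 is a class of matroids closed under contraction and isomorphism, no member
of which of rank r has a circuit of cardinality at most t, and 0 ≤ t ≤ r ≤ n, then
log \tilde m(n,r) ≤ (C(n,r)/C(n−t,r−t)) · log \tilde m(n−t,r−t). -/
theorem class_count_blowup_girth (𝓜 : ∀ ⦃α : Type⦄, Matroid α → Prop)
    (hcontract : ∀ (α : Type) (M : Matroid α) (C : Set α), 𝓜 M → 𝓜 (mcontract M C))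
    (hiso : ∀ (α β : Type) (M : Matroid α) (N : Matroid β), 𝓜 M → MatroidIso M N → 𝓜 N)
    (t r n : ℕ) (htr : t ≤ r) (hrn : r ≤ n)
    (hgirth : ∀ (α : Type) (M : Matroid α), 𝓜 M → mrk M = r →
      ∀ C, PavingEnum.IsCircuit M C → ¬ (C.encard ≤ (t : ℕ∞))) :
    Real.log (classCount 𝓜 n r) ≤
      ((n.choose r : ℝ) / ((n - t).choose (r - t) : ℝ)) *
        Real.log (classCount 𝓜 (n - t) (r - t)) := by
  have hc : 0 < (n.choose t : ℝ) / r.choose t := by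
    have := Nat.choose_pos (htr.trans hrn)
    have := Nat.choose_pos htr
    positivity
  rw [← Nat.cast_choose_div_cast_choose htr hrn]
  exact Real.log_natCast_le_mul_log_of_le_rpow hc
    (classCount_le_rpow hcontract hiso htr fun M hM ↦ hgirth _ M hM.1 hM.2.2)
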